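/- arXiv:2311.00954 — 2 statements merged into one kernel-verified Lean document; each statement's English description precedes it below -/
import Mathlib

section
/- Let D be a bounded smooth domain in R^3, ρ > 0 a continuous function on the closure of D, and φ a C² function solving Δφ + e^{-φ} = ρ in D with φ = 0 on ∂D. Then for all x in D, min{0, -ln(max_D ρ)} ≤ φ(x) ≤ max{0, -ln(min_D ρ)}. -/
/-! At an interior maximum `x₀` of `φ` we have `Δφ(x₀) ≤ 0`, so the equation gives
`ρ(x₀) ≤ e^{-φ(x₀)}`, i.e. `φ(x₀) ≤ -ln ρ(x₀) ≤ -ln (min ρ)`; a maximum on the boundary is `0`.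
Symmetrically `Δφ ≥ 0` at an interior minimum gives the lower bound. `Δφ(x₀) ≤ 0` is the
one-dimensional second-derivative test along each coordinate line through `x₀`. -/

open Real

noncomputable section

abbrev E3 := EuclideanSpace ℝ (Fin 3)

/-- Spatial partial derivative `∂_i` of a function on `ℝ³`. -/
def pds (i : Fin 3) (f : E3 → ℝ) : E3 → ℝ :=
  fun x => fderiv ℝ f x (EuclideanSpace.single i 1)

/-- Laplacian `Δ f = Σ_i ∂_i ∂_i f` on `ℝ³`. -/
def lapS (f : E3 → ℝ) : E3 → ℝ :=
  fun x => ∑ i : Fin 3, pds i (pds i f) x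

open Filter Topology

section MaximumPrinciple

variable {X β : Type*} [TopologicalSpace X] [LinearOrder β] [TopologicalSpace β]
  {D : Set X} {f : X → β} {c : β} {x : X}

theorem le_of_frontier_le_of_isLocalMax_le [ClosedIciTopology β] (hD : IsOpen D)
    (hK : IsCompact (closure D)) (hf : ContinuousOn f (closure D))
    (hfr : ∀ y ∈ frontier D, f y ≤ c) (hloc : ∀ y ∈ D, IsLocalMax f y → f y ≤ c)
    (hx : x ∈ closure D) : f x ≤ c := by
  obtain ⟨x₀, hx₀, hmax⟩ := hK.exists_isMaxOn ⟨x, hx⟩ hf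
  refine (hmax hx).trans ?_
  by_cases hx₀D : x₀ ∈ D
  · exact hloc x₀ hx₀D (hmax.isLocalMax (mem_of_superset (hD.mem_nhds hx₀D) subset_closure))
  · exact hfr x₀ (hD.frontier_eq ▸ ⟨hx₀, hx₀D⟩)

theorem le_of_le_frontier_of_le_isLocalMin [ClosedIicTopology β] (hD : IsOpen D)
    (hK : IsCompact (closure D)) (hf : ContinuousOn f (closure D))
    (hfr : ∀ y ∈ frontier D, c ≤ f y) (hloc : ∀ y ∈ D, IsLocalMin f y → c ≤ f y)
    (hx : x ∈ closure D) : c ≤ f x :=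
  le_of_frontier_le_of_isLocalMax_le (β := βᵒᵈ) hD hK hf hfr hloc hx

end MaximumPrinciple

section SecondDerivativeTest

variable {f : ℝ → ℝ} {t₀ : ℝ}

theorem deriv_deriv_nonpos_of_isLocalMax (hmax : IsLocalMax f t₀) (hc : ContinuousAt f t₀) :
    deriv (deriv f) t₀ ≤ 0 := by
  by_contra! hpos
  -- the second-derivative test makes `t₀` a local minimum too, so `f` is locally constant
  have hmin : IsLocalMin f t₀ := isLocalMin_of_deriv_deriv_pos hpos hmax.deriv_eq_zero hc
  have hconst : f =ᶠ[𝓝 t₀] fun _ => f t₀ :=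
    (hmin.and hmax).mono fun _ h => le_antisymm h.2 h.1
  have : deriv (deriv f) t₀ = 0 := by simp [hconst.deriv.deriv_eq]
  exact hpos.ne' this

theorem deriv_deriv_nonneg_of_isLocalMin (hmin : IsLocalMin f t₀) (hc : ContinuousAt f t₀) :
    0 ≤ deriv (deriv f) t₀ := by
  simpa using deriv_deriv_nonpos_of_isLocalMax hmin.neg hc.neg

end SecondDerivativeTest

section Directional

variable {E : Type*} [NormedAddCommGroup E] [NormedSpace ℝ E] {f : E → ℝ} {x : E}

theorem deriv_deriv_comp_add_smul (hf : ContDiffAt ℝ 2 f x) (v : E) :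
    deriv (deriv fun t : ℝ => f (x + t • v)) 0 = fderiv ℝ (fun y => fderiv ℝ f y v) x v := by
  have hline : ∀ t : ℝ, HasDerivAt (fun t : ℝ => x + t • v) v t := fun t => by
    simpa using ((hasDerivAt_id t).smul_const v).const_add x
  have htend : Tendsto (fun t : ℝ => x + t • v) (𝓝 0) (𝓝 x) := by
    simpa using (hline 0).continuousAt.tendsto
  have hdiff : ∀ᶠ t in 𝓝 (0 : ℝ), DifferentiableAt ℝ f (x + t • v) :=
    htend.eventually ((hf.eventually (by simp)).mono fun _ h => h.differentiableAt (by simp))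
  have hderiv : deriv (fun t : ℝ => f (x + t • v)) =ᶠ[𝓝 0] fun t => fderiv ℝ f (x + t • v) v :=
    hdiff.mono fun t h => (h.hasFDerivAt.comp_hasDerivAt t (hline t)).deriv
  have hf' : DifferentiableAt ℝ (fun y => fderiv ℝ f y v) x :=
    ((hf.fderiv_right (m := 1) le_rfl).differentiableAt one_ne_zero).clm_apply
      (differentiableAt_const v)
  rw [hderiv.deriv_eq]
  exact (hf'.hasFDerivAt.comp_hasDerivAt_of_eq 0 (hline 0) (by simp)).deriv

theorem fderiv_fderiv_apply_nonpos_of_isLocalMax (hf : ContDiffAt ℝ 2 f x)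
    (hmax : IsLocalMax f x) (v : E) : fderiv ℝ (fun y => fderiv ℝ f y v) x v ≤ 0 := by
  have hline : ContinuousAt (fun t : ℝ => x + t • v) 0 := by fun_prop
  rw [← deriv_deriv_comp_add_smul hf v]
  exact deriv_deriv_nonpos_of_isLocalMax
    (IsLocalMax.comp_continuous (g := fun t : ℝ => x + t • v) (by simpa using hmax) hline)
    (hf.continuousAt.comp_of_eq hline (by simp))

theorem fderiv_fderiv_apply_nonneg_of_isLocalMin (hf : ContDiffAt ℝ 2 f x)
    (hmin : IsLocalMin f x) (v : E) : 0 ≤ fderiv ℝ (fun y => fderiv ℝ f y v) x v := by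
  have hline : ContinuousAt (fun t : ℝ => x + t • v) 0 := by fun_prop
  rw [← deriv_deriv_comp_add_smul hf v]
  exact deriv_deriv_nonneg_of_isLocalMin
    (IsLocalMin.comp_continuous (g := fun t : ℝ => x + t • v) (by simpa using hmin) hline)
    (hf.continuousAt.comp_of_eq hline (by simp))

end Directional

theorem lapS_nonpos_of_isLocalMax {f : E3 → ℝ} {x : E3} (hf : ContDiffAt ℝ 2 f x)
    (hmax : IsLocalMax f x) : lapS f x ≤ 0 :=
  Finset.sum_nonpos fun _ _ => fderiv_fderiv_apply_nonpos_of_isLocalMax hf hmax _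

theorem lapS_nonneg_of_isLocalMin {f : E3 → ℝ} {x : E3} (hf : ContDiffAt ℝ 2 f x)
    (hmin : IsLocalMin f x) : 0 ≤ lapS f x :=
  Finset.sum_nonneg fun _ _ => fderiv_fderiv_apply_nonneg_of_isLocalMin hf hmin _

/-- maximum-principle bounds for a solution of `Δφ + e^{-φ} = ρ` in a
bounded smooth domain `D` with `φ = 0` on `∂D`:
`min{0, -ln(max_D̄ ρ)} ≤ φ(x) ≤ max{0, -ln(min_D̄ ρ)}` for all `x ∈ D`. -/
theorem poisson_maximum_principle
    (D : Set E3) (hopen : IsOpen D) (hbd : Bornology.IsBounded D)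
    (ρ φ : E3 → ℝ)
    (hρ : ContinuousOn ρ (closure D))
    (hρpos : ∀ x ∈ closure D, 0 < ρ x)
    (hφcont : ContinuousOn φ (closure D))
    (hφC2 : ContDiffOn ℝ 2 φ D)
    (hPDE : ∀ x ∈ D, lapS φ x + Real.exp (-φ x) = ρ x)
    (hbc : ∀ x ∈ frontier D, φ x = 0) :
    ∀ x ∈ D,
      min 0 (-Real.log (sSup (ρ '' closure D))) ≤ φ x ∧
      φ x ≤ max 0 (-Real.log (sInf (ρ '' closure D))) := by
  intro x hx
  have hK : IsCompact (closure D) := hbd.isCompact_closure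
  have hρK : IsCompact (ρ '' closure D) := hK.image_of_continuousOn hρ
  have hρ_mem : ∀ y ∈ D, ρ y ∈ ρ '' closure D := fun y hy => ⟨y, subset_closure hy, rfl⟩
  have hinf_pos : 0 < sInf (ρ '' closure D) := by
    obtain ⟨y, hy, hρy⟩ := hρK.sInf_mem ⟨ρ x, hρ_mem x hx⟩
    exact hρy ▸ hρpos y hy
  have hC2 : ∀ y ∈ D, ContDiffAt ℝ 2 φ y := fun y hy => hφC2.contDiffAt (hopen.mem_nhds hy)
  constructor
  · refine le_of_le_frontier_of_le_isLocalMin hopen hK hφcont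
      (fun y hy => hbc y hy ▸ min_le_left _ _) (fun y hy hmin => ?_) (subset_closure hx)
    have hexp : exp (-φ y) ≤ sSup (ρ '' closure D) := by
      linarith [lapS_nonneg_of_isLocalMin (hC2 y hy) hmin, hPDE y hy,
        le_csSup hρK.bddAbove (hρ_mem y hy)]
    have := (le_log_iff_exp_le ((exp_pos _).trans_le hexp)).2 hexp
    exact (min_le_right _ _).trans (by linarith)
  · refine le_of_frontier_le_of_isLocalMax_le hopen hK hφcont
      (fun y hy => hbc y hy ▸ le_max_left _ _) (fun y hy hmax => ?_) (subset_closure hx)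
    have hexp : sInf (ρ '' closure D) ≤ exp (-φ y) := by
      linarith [lapS_nonpos_of_isLocalMax (hC2 y hy) hmax, hPDE y hy,
        csInf_le hρK.bddBelow (hρ_mem y hy)]
    have := (log_le_iff_le_exp hinf_pos).2 hexp
    exact (le_max_right _ _).trans' (by linarith)

end
end

section
/- Let ρ, v, p be smooth fields satisfying the continuity equation D_t ρ + ρ div v = 0 and the Euler–Poisson momentum equation D_t v + ρ^{-1}∂p = κ ∂φ. Then the density satisfies the wave-type equation D_t² ρ - Δp = ρ H₀ - κ ρ Δφ, where H₀ = (div v)² - ρ^{-2}(∂ρ · ∂p) + (∂_j v^k)(∂_k v^j). -/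
open Real

noncomputable section

/-- Spatial partial derivative `∂_i` of a function on spacetime `ℝ × ℝ³`. -/
def pd (i : Fin 3) (f : ℝ × E3 → ℝ) : ℝ × E3 → ℝ :=
  fun p => fderiv ℝ (fun y => f (p.1, y)) p.2 (EuclideanSpace.single i 1)

/-- Time derivative `∂_t`. -/
def td (f : ℝ × E3 → ℝ) : ℝ × E3 → ℝ :=
  fun p => deriv (fun s => f (s, p.2)) p.1

/-- Material derivative `D_t f = ∂_t f + v^k ∂_k f`. -/
def Dmat (v : ℝ × E3 → E3) (f : ℝ × E3 → ℝ) : ℝ × E3 → ℝ :=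
  fun p => td f p + ∑ k : Fin 3, v p k * pd k f p

namespace Wave
variable {f g : ℝ × E3 → ℝ}

lemma pd_eq (hf : ContDiff ℝ (⊤ : ℕ∞) f) (i : Fin 3) (p : ℝ × E3) :
    pd i f p = fderiv ℝ f p (0, EuclideanSpace.single i 1) := by
  have h1 : HasFDerivAt (fun y : E3 => (p.1, y)) (ContinuousLinearMap.inr ℝ ℝ E3) p.2 :=
    hasFDerivAt_prodMk_right p.1 p.2
  have h2 : HasFDerivAt f (fderiv ℝ f p) ((p.1, p.2) : ℝ × E3) := by
    simpa using (hf.differentiable (by simp) p).hasFDerivAt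
  have h3 := (h2.comp p.2 h1).fderiv
  have : pd i f p = ((fderiv ℝ f p).comp (ContinuousLinearMap.inr ℝ ℝ E3))
      (EuclideanSpace.single i 1) := by
    rw [pd, ← h3]; rfl
  simpa using this

lemma td_eq (hf : ContDiff ℝ (⊤ : ℕ∞) f) (p : ℝ × E3) :
    td f p = fderiv ℝ f p (1, 0) := by
  have h1 : HasFDerivAt (fun s : ℝ => (s, p.2)) (ContinuousLinearMap.inl ℝ ℝ E3) p.1 :=
    hasFDerivAt_prodMk_left p.1 p.2
  have h2 : HasFDerivAt f (fderiv ℝ f p) ((p.1, p.2) : ℝ × E3) := by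
    simpa using (hf.differentiable (by simp) p).hasFDerivAt
  have h3 := ((h2.comp p.1 h1).hasDerivAt).deriv
  rw [td, show (fun s : ℝ => f (s, p.2)) = f ∘ (fun s => (s, p.2)) from rfl, h3]; simp

lemma contDiff_fd (hf : ContDiff ℝ (⊤ : ℕ∞) f) (w : ℝ × E3) :
    ContDiff ℝ (⊤ : ℕ∞) (fun p => fderiv ℝ f p w) :=
  (hf.fderiv_right (by simp)).clm_apply contDiff_const

lemma contDiff_pd (hf : ContDiff ℝ (⊤ : ℕ∞) f) (i : Fin 3) : ContDiff ℝ (⊤ : ℕ∞) (pd i f) := by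
  have : pd i f = fun p => fderiv ℝ f p (0, EuclideanSpace.single i 1) :=
    funext (pd_eq hf i)
  rw [this]; exact contDiff_fd hf _

lemma contDiff_td (hf : ContDiff ℝ (⊤ : ℕ∞) f) : ContDiff ℝ (⊤ : ℕ∞) (td f) := by
  have : td f = fun p => fderiv ℝ f p (1, 0) := funext (td_eq hf)
  rw [this]; exact contDiff_fd hf _

-- directional derivative arithmetic
lemma fd_add (hf : ContDiff ℝ (⊤ : ℕ∞) f) (hg : ContDiff ℝ (⊤ : ℕ∞) g) (p w) :
    fderiv ℝ (fun q => f q + g q) p w = fderiv ℝ f p w + fderiv ℝ g p w := by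
  rw [fderiv_fun_add (hf.differentiable (by simp) p) (hg.differentiable (by simp) p)]; rfl

lemma fd_mul (hf : ContDiff ℝ (⊤ : ℕ∞) f) (hg : ContDiff ℝ (⊤ : ℕ∞) g) (p w) :
    fderiv ℝ (fun q => f q * g q) p w
      = fderiv ℝ f p w * g p + f p * fderiv ℝ g p w := by
  rw [fderiv_fun_mul (hf.differentiable (by simp) p) (hg.differentiable (by simp) p)]
  simp; ring

lemma fd_neg (p w) :
    fderiv ℝ (fun q => -(f q)) p w = -(fderiv ℝ f p w) := by
  rw [fderiv_fun_neg]; rfl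

lemma fd_const_mul (hf : ContDiff ℝ (⊤ : ℕ∞) f) (c : ℝ) (p w) :
    fderiv ℝ (fun q => c * f q) p w = c * fderiv ℝ f p w := by
  rw [fderiv_const_mul (hf.differentiable (by simp) p)]; rfl

lemma fd_sum (F : Fin 3 → (ℝ × E3 → ℝ)) (hF : ∀ k, ContDiff ℝ (⊤ : ℕ∞) (F k)) (p w) :
    fderiv ℝ (fun q => ∑ k : Fin 3, F k q) p w = ∑ k : Fin 3, fderiv ℝ (F k) p w := by
  rw [fderiv_fun_sum (fun k _ => (hF k).differentiable (by simp) p)]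
  simp


-- pd / td arithmetic
lemma pd_add (hf : ContDiff ℝ (⊤ : ℕ∞) f) (hg : ContDiff ℝ (⊤ : ℕ∞) g) (i p) :
    pd i (fun q => f q + g q) p = pd i f p + pd i g p := by
  rw [pd_eq (hf.add hg), fd_add hf hg, ← pd_eq hf, ← pd_eq hg]

lemma pd_mul (hf : ContDiff ℝ (⊤ : ℕ∞) f) (hg : ContDiff ℝ (⊤ : ℕ∞) g) (i p) :
    pd i (fun q => f q * g q) p = pd i f p * g p + f p * pd i g p := by
  rw [pd_eq (hf.mul hg), fd_mul hf hg, ← pd_eq hf, ← pd_eq hg]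

lemma pd_neg (hf : ContDiff ℝ (⊤ : ℕ∞) f) (i p) :
    pd i (fun q => -(f q)) p = -(pd i f p) := by
  rw [pd_eq hf.neg, fd_neg, ← pd_eq hf]

lemma pd_const_mul (hf : ContDiff ℝ (⊤ : ℕ∞) f) (c : ℝ) (i p) :
    pd i (fun q => c * f q) p = c * pd i f p := by
  rw [pd_eq (contDiff_const.mul hf), fd_const_mul hf, ← pd_eq hf]

lemma pd_sum (F : Fin 3 → (ℝ × E3 → ℝ)) (hF : ∀ k, ContDiff ℝ (⊤ : ℕ∞) (F k)) (i p) :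
    pd i (fun q => ∑ k : Fin 3, F k q) p = ∑ k : Fin 3, pd i (F k) p := by
  rw [pd_eq (by exact ContDiff.sum fun k _ => hF k), fd_sum F hF]
  exact Finset.sum_congr rfl fun k _ => (pd_eq (hF k) i p).symm

lemma td_add (hf : ContDiff ℝ (⊤ : ℕ∞) f) (hg : ContDiff ℝ (⊤ : ℕ∞) g) (p) :
    td (fun q => f q + g q) p = td f p + td g p := by
  rw [td_eq (hf.add hg), fd_add hf hg, ← td_eq hf, ← td_eq hg]

lemma td_mul (hf : ContDiff ℝ (⊤ : ℕ∞) f) (hg : ContDiff ℝ (⊤ : ℕ∞) g) (p) :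
    td (fun q => f q * g q) p = td f p * g p + f p * td g p := by
  rw [td_eq (hf.mul hg), fd_mul hf hg, ← td_eq hf, ← td_eq hg]

lemma td_neg (hf : ContDiff ℝ (⊤ : ℕ∞) f) (p) :
    td (fun q => -(f q)) p = -(td f p) := by
  rw [td_eq hf.neg, fd_neg, ← td_eq hf]

lemma td_sum (F : Fin 3 → (ℝ × E3 → ℝ)) (hF : ∀ k, ContDiff ℝ (⊤ : ℕ∞) (F k)) (p) :
    td (fun q => ∑ k : Fin 3, F k q) p = ∑ k : Fin 3, td (F k) p := by
  rw [td_eq (by exact ContDiff.sum fun k _ => hF k), fd_sum F hF]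
  exact Finset.sum_congr rfl fun k _ => (td_eq (hF k) p).symm

-- second derivatives
lemma fd_fd (hf : ContDiff ℝ (⊤ : ℕ∞) f) (w u : ℝ × E3) (p : ℝ × E3) :
    fderiv ℝ (fun q => fderiv ℝ f q w) p u = fderiv ℝ (fderiv ℝ f) p u w := by
  have hd : DifferentiableAt ℝ (fderiv ℝ f) p :=
    ((hf.fderiv_right (m := (⊤ : ℕ∞)) (by simp)).differentiable (by simp)) p
  have h1 : HasFDerivAt (fun q => fderiv ℝ f q w)
      ((ContinuousLinearMap.apply ℝ ℝ w).comp (fderiv ℝ (fderiv ℝ f) p)) p :=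
    ((ContinuousLinearMap.apply ℝ ℝ w).hasFDerivAt.comp p hd.hasFDerivAt)
  rw [h1.fderiv]; rfl

lemma fd_symm (hf : ContDiff ℝ (⊤ : ℕ∞) f) (p u w : ℝ × E3) :
    fderiv ℝ (fderiv ℝ f) p u w = fderiv ℝ (fderiv ℝ f) p w u :=
  second_derivative_symmetric
    (fun y => (hf.differentiable (by simp) y).hasFDerivAt)
    (((hf.fderiv_right (m := (⊤ : ℕ∞)) (by simp)).differentiable (by simp) p).hasFDerivAt) u w

lemma pd_fd (hf : ContDiff ℝ (⊤ : ℕ∞) f) (w : ℝ × E3) (i p) :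
    pd i (fun q => fderiv ℝ f q w) p
      = fderiv ℝ (fderiv ℝ f) p (0, EuclideanSpace.single i 1) w := by
  rw [pd_eq (contDiff_fd hf w), fd_fd hf]

lemma td_fd (hf : ContDiff ℝ (⊤ : ℕ∞) f) (w : ℝ × E3) (p) :
    td (fun q => fderiv ℝ f q w) p = fderiv ℝ (fderiv ℝ f) p (1, 0) w := by
  rw [td_eq (contDiff_fd hf w), fd_fd hf]

lemma pd_pd_comm (hf : ContDiff ℝ (⊤ : ℕ∞) f) (i j : Fin 3) (p) :
    pd i (pd j f) p = pd j (pd i f) p := by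
  have e1 : pd j f = fun q => fderiv ℝ f q (0, EuclideanSpace.single j 1) :=
    funext (pd_eq hf j)
  have e2 : pd i f = fun q => fderiv ℝ f q (0, EuclideanSpace.single i 1) :=
    funext (pd_eq hf i)
  rw [e1, e2, pd_fd hf, pd_fd hf, fd_symm hf]

lemma td_pd_comm (hf : ContDiff ℝ (⊤ : ℕ∞) f) (i : Fin 3) (p) :
    pd i (td f) p = td (pd i f) p := by
  have e1 : td f = fun q => fderiv ℝ f q (1, 0) := funext (td_eq hf)
  have e2 : pd i f = fun q => fderiv ℝ f q (0, EuclideanSpace.single i 1) :=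
    funext (pd_eq hf i)
  rw [e1, e2, pd_fd hf, td_fd hf, fd_symm hf]


variable {v : ℝ × E3 → E3}

lemma contDiff_Dmat (hv : ContDiff ℝ (⊤ : ℕ∞) v) (hf : ContDiff ℝ (⊤ : ℕ∞) f) :
    ContDiff ℝ (⊤ : ℕ∞) (Dmat v f) := by
  have hvk : ∀ k : Fin 3, ContDiff ℝ (⊤ : ℕ∞) (fun q => v q k) :=
    fun k => contDiff_euclidean.mp hv k
  exact (contDiff_td hf).add
    (ContDiff.sum fun k _ => (hvk k).mul (contDiff_pd hf k))

lemma Dmat_mul (hf : ContDiff ℝ (⊤ : ℕ∞) f) (hg : ContDiff ℝ (⊤ : ℕ∞) g) (p) :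
    Dmat v (fun q => f q * g q) p = Dmat v f p * g p + f p * Dmat v g p := by
  have h1 : ∑ k : Fin 3, v p k * (pd k f p * g p + f p * pd k g p)
      = (∑ k : Fin 3, v p k * pd k f p) * g p
        + f p * (∑ k : Fin 3, v p k * pd k g p) := by
    rw [Finset.sum_mul, Finset.mul_sum, ← Finset.sum_add_distrib]
    exact Finset.sum_congr rfl fun k _ => by ring
  simp only [Dmat, td_mul hf hg, pd_mul hf hg, h1]; ring

lemma Dmat_neg (hf : ContDiff ℝ (⊤ : ℕ∞) f) (p) :
    Dmat v (fun q => -(f q)) p = -(Dmat v f p) := by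
  simp only [Dmat, td_neg hf, pd_neg hf, mul_neg, Finset.sum_neg_distrib, neg_add]

lemma Dmat_sum (F : Fin 3 → (ℝ × E3 → ℝ)) (hF : ∀ k, ContDiff ℝ (⊤ : ℕ∞) (F k)) (p) :
    Dmat v (fun q => ∑ k : Fin 3, F k q) p = ∑ k : Fin 3, Dmat v (F k) p := by
  simp only [Dmat, td_sum F hF, pd_sum F hF, Finset.mul_sum, Finset.sum_add_distrib]
  rw [Finset.sum_comm]

lemma pd_Dmat (hv : ContDiff ℝ (⊤ : ℕ∞) v) (hf : ContDiff ℝ (⊤ : ℕ∞) f) (i : Fin 3) (p) :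
    pd i (Dmat v f) p
      = Dmat v (pd i f) p + ∑ j : Fin 3, pd i (fun q => v q j) p * pd j f p := by
  have hvk : ∀ k : Fin 3, ContDiff ℝ (⊤ : ℕ∞) (fun q => v q k) :=
    fun k => contDiff_euclidean.mp hv k
  have step1 : pd i (Dmat v f) p
      = pd i (td f) p + ∑ j : Fin 3,
          (pd i (fun q => v q j) p * pd j f p + v p j * pd i (pd j f) p) := by
    rw [show Dmat v f = fun q => td f q + ∑ j : Fin 3, v q j * pd j f q from rfl,
      pd_add (contDiff_td hf)
        (ContDiff.sum fun j _ => (hvk j).mul (contDiff_pd hf j)),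
      pd_sum _ (fun j => (hvk j).mul (contDiff_pd hf j))]
    exact congrArg _ (Finset.sum_congr rfl fun j _ => pd_mul (hvk j) (contDiff_pd hf j) i p)
  rw [step1, td_pd_comm hf, Dmat, Finset.sum_add_distrib]
  have : ∑ j : Fin 3, v p j * pd i (pd j f) p = ∑ j : Fin 3, v p j * pd j (pd i f) p :=
    Finset.sum_congr rfl fun j _ => by rw [pd_pd_comm hf]
  rw [this]; ring

end Wave


open Wave in
/-- if `D_t ρ + ρ div v = 0` and `D_t v + ρ⁻¹ ∂p = κ ∂φ`, then
`D_t² ρ - Δp = ρ H₀ - κ ρ Δφ`, where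
`H₀ = (div v)² - ρ^{-2} ∂ρ·∂p + (∂_j v^k)(∂_k v^j)`. -/
theorem wave_equation_density
    (v : ℝ × E3 → E3) (ρ pr φ : ℝ × E3 → ℝ) (κ : ℝ)
    (hκ : κ = 0 ∨ κ = 1)
    (hv : ContDiff ℝ (⊤ : ℕ∞) v) (hρ : ContDiff ℝ (⊤ : ℕ∞) ρ)
    (hp : ContDiff ℝ (⊤ : ℕ∞) pr) (hφ : ContDiff ℝ (⊤ : ℕ∞) φ)
    (hρpos : ∀ p : ℝ × E3, 0 < ρ p)
    (hcont : ∀ p : ℝ × E3,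
      Dmat v ρ p + ρ p * (∑ k : Fin 3, pd k (fun q => v q k) p) = 0)
    (hmom : ∀ (p : ℝ × E3) (i : Fin 3),
      Dmat v (fun q => v q i) p + (ρ p)⁻¹ * pd i pr p = κ * pd i φ p) :
    ∀ p : ℝ × E3,
      Dmat v (Dmat v ρ) p - (∑ j : Fin 3, pd j (pd j pr) p)
        = ρ p * ((∑ k : Fin 3, pd k (fun q => v q k) p)^2
            - ((ρ p)^2)⁻¹ * (∑ i : Fin 3, pd i ρ p * pd i pr p)
            + ∑ j : Fin 3, ∑ k : Fin 3,
                pd j (fun q => v q k) p * pd k (fun q => v q j) p)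
          - κ * ρ p * (∑ j : Fin 3, pd j (pd j φ) p) := by
  intro p
  have hvk : ∀ k : Fin 3, ContDiff ℝ (⊤ : ℕ∞) (fun q => v q k) :=
    fun k => contDiff_euclidean.mp hv k
  have hρne : ∀ q, ρ q ≠ 0 := fun q => (hρpos q).ne'
  let A : ℝ × E3 → ℝ := fun q => ∑ k : Fin 3, pd k (fun r => v r k) q
  have hAc : ContDiff ℝ (⊤ : ℕ∞) A := ContDiff.sum fun k _ => contDiff_pd (hvk k) k
  -- Part 1 : continuity equation, twice
  have hDρ : Dmat v ρ = fun q => -(ρ q * A q) := funext fun q => by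
    have h := hcont q
    show Dmat v ρ q = -(ρ q * (∑ k : Fin 3, pd k (fun r => v r k) q))
    linarith
  have hDDρ : Dmat v (Dmat v ρ) p = ρ p * A p * A p - ρ p * Dmat v A p := by
    have h1 : Dmat v (fun q => -(ρ q * A q)) p
        = -(Dmat v (fun q => ρ q * A q) p) := Dmat_neg (hρ.mul hAc) p
    have h2 : Dmat v (fun q => ρ q * A q) p
        = Dmat v ρ p * A p + ρ p * Dmat v A p := Dmat_mul hρ hAc p
    have h3 : Dmat v ρ p = -(ρ p * A p) := by rw [hDρ]
    rw [hDρ, h1, h2, h3]; ring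
  -- Part 2 : divergence of the momentum equation
  have hMom2 : ∀ k : Fin 3,
      ρ p * Dmat v (pd k (fun q => v q k)) p
        = (ρ p)⁻¹ * (pd k ρ p * pd k pr p)
          - ρ p * (∑ j : Fin 3, pd k (fun q => v q j) p * pd j (fun q => v q k) p)
          - pd k (pd k pr) p + κ * (ρ p * pd k (pd k φ) p) := by
    intro k
    have hMc : ContDiff ℝ (⊤ : ℕ∞) (Dmat v (fun q => v q k)) := contDiff_Dmat hv (hvk k)
    have hZc : ContDiff ℝ (⊤ : ℕ∞) (fun q => pd k pr q
        + -(κ * (ρ q * pd k φ q))) :=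
      (contDiff_pd hp k).add ((contDiff_const.mul (hρ.mul (contDiff_pd hφ k))).neg)
    have hZ : (fun q => ρ q * Dmat v (fun r => v r k) q
        + (pd k pr q + -(κ * (ρ q * pd k φ q)))) = fun _ => (0:ℝ) := by
      funext q
      have h := hmom q k
      have hne := hρne q
      field_simp at h
      linarith
    have hkey : pd k (fun q => ρ q * Dmat v (fun r => v r k) q
        + (pd k pr q + -(κ * (ρ q * pd k φ q)))) p = 0 := by
      rw [hZ]
      simp [pd]
    rw [pd_add (hρ.mul hMc) hZc] at hkey
    rw [pd_mul hρ hMc] at hkey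
    rw [pd_add (contDiff_pd hp k)
      ((contDiff_const.mul (hρ.mul (contDiff_pd hφ k))).neg)] at hkey
    rw [pd_neg (contDiff_const.mul (hρ.mul (contDiff_pd hφ k)))] at hkey
    rw [pd_const_mul (hρ.mul (contDiff_pd hφ k))] at hkey
    rw [pd_mul hρ (contDiff_pd hφ k)] at hkey
    rw [pd_Dmat hv (hvk k)] at hkey
    have hMval : Dmat v (fun q => v q k) p = κ * pd k φ p - (ρ p)⁻¹ * pd k pr p := by
      have h := hmom p k; linarith
    rw [hMval] at hkey
    linear_combination hkey
  have hDA : Dmat v A p = ∑ k : Fin 3, Dmat v (pd k (fun q => v q k)) p :=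
    Dmat_sum (fun k => pd k (fun q => v q k)) (fun k => contDiff_pd (hvk k) k) p
  have hρDA : ρ p * Dmat v A p
      = (ρ p)⁻¹ * (∑ i : Fin 3, pd i ρ p * pd i pr p)
        - ρ p * (∑ k : Fin 3, ∑ j : Fin 3,
            pd k (fun q => v q j) p * pd j (fun q => v q k) p)
        - (∑ j : Fin 3, pd j (pd j pr) p)
        + κ * (ρ p * (∑ j : Fin 3, pd j (pd j φ) p)) := by
    rw [hDA, Finset.mul_sum]
    rw [Finset.sum_congr rfl fun k _ => hMom2 k]
    simp only [Finset.sum_add_distrib, Finset.sum_sub_distrib, ← Finset.mul_sum]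
  -- Assemble
  have hAp : (∑ k : Fin 3, pd k (fun q => v q k) p) = A p := rfl
  have hS2 : (∑ j : Fin 3, ∑ k : Fin 3,
        pd j (fun q => v q k) p * pd k (fun q => v q j) p)
      = (∑ k : Fin 3, ∑ j : Fin 3,
        pd k (fun q => v q j) p * pd j (fun q => v q k) p) := rfl
  rw [hAp, hS2, hDDρ, hρDA]
  have hinv : ((ρ p)^2)⁻¹ * ρ p = (ρ p)⁻¹ := by
    rw [sq]; field_simp
  linear_combination (∑ i : Fin 3, pd i ρ p * pd i pr p) * hinv

end
end
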